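/- arXiv:2009.08973 — 2 statements merged into one kernel-verified Lean document; each statement's English description precedes it below -/
import Mathlib

section
/- Let M be a finite MDP with discount γ ∈ [0,1) and let π be a policy with action-value function Q^π. Define the greedy policy π_new by π_new(s) = δ_{a*(s)} where a*(s) ∈ argmax_a Q^π(s,a). Then for all (s,a), Q^{π_new}(s,a) ≥ Q^π(s,a). -/
/-!
Let `D = Qnew - Qπ`. Subtracting the two Bellman equations and using that the greedy action
dominates the `π`-average of `Qπ` gives `D s a ≥ γ · 𝔼_{s'} D s' (astar s')`. Hence a lower
bound `c` of `D` yields the lower bound `γ c`; applied to `c = min D` this forces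
`min D ≥ γ · min D`, so `min D ≥ 0` because `γ < 1`.
-/

open Finset

section WeightedAverage

variable {ι : Type*} [Fintype ι] {w f : ι → ℝ} {c : ℝ}

theorem sum_mul_le_of_forall_le (hw : ∀ i, 0 ≤ w i) (hw1 : ∑ i, w i = 1)
    (hf : ∀ i, f i ≤ c) : ∑ i, w i * f i ≤ c :=
  calc ∑ i, w i * f i ≤ ∑ i, w i * c :=
        sum_le_sum fun i _ => mul_le_mul_of_nonneg_left (hf i) (hw i)
    _ = c := by rw [← sum_mul, hw1, one_mul]

theorem le_sum_mul_of_forall_le (hw : ∀ i, 0 ≤ w i) (hw1 : ∑ i, w i = 1)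
    (hf : ∀ i, c ≤ f i) : c ≤ ∑ i, w i * f i :=
  calc c = ∑ i, w i * c := by rw [← sum_mul, hw1, one_mul]
    _ ≤ ∑ i, w i * f i :=
        sum_le_sum fun i _ => mul_le_mul_of_nonneg_left (hf i) (hw i)

end WeightedAverage

theorem nonneg_of_forall_lowerBound_mul_le {ι : Type*} [Finite ι] {D : ι → ℝ} {γ : ℝ}
    (hγ : γ < 1) (h : ∀ c, (∀ j, c ≤ D j) → ∀ i, γ * c ≤ D i) (i : ι) : 0 ≤ D i := by
  have : Nonempty ι := ⟨i⟩
  obtain ⟨j, hj⟩ := Finite.exists_min D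
  have hmin_nonneg : 0 ≤ D j := by nlinarith [h (D j) hj j]
  exact hmin_nonneg.trans (hj i)

theorem greedy_policy_improvement_general
    {S A : Type*} [Fintype S] [Fintype A]
    (P : S → A → S → ℝ) (hPpos : ∀ s a s', 0 ≤ P s a s')
    (hPsum : ∀ s a, ∑ s', P s a s' = 1)
    (r : S → A → ℝ) (γ : ℝ) (hγ0 : 0 ≤ γ) (hγ1 : γ < 1)
    (π : S → A → ℝ)
    (hπpos : ∀ s a, 0 ≤ π s a) (hπsum : ∀ s, ∑ a, π s a = 1)
    (Qπ Qnew : S → A → ℝ)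
    (hBellπ : ∀ s a, Qπ s a =
      r s a + γ * ∑ s', P s a s' * ∑ a', π s' a' * Qπ s' a')
    (astar : S → A)
    (hgreedy : ∀ s a, Qπ s a ≤ Qπ s (astar s))
    (hBellnew : ∀ s a, Qnew s a =
      r s a + γ * ∑ s', P s a s' * Qnew s' (astar s')) :
    ∀ s a, Qπ s a ≤ Qnew s a := by
  have hV : ∀ s', ∑ a', π s' a' * Qπ s' a' ≤ Qπ s' (astar s') := fun s' =>
    sum_mul_le_of_forall_le (hπpos s') (hπsum s') (hgreedy s')
  have hstep : ∀ c, (∀ p : S × A, c ≤ Qnew p.1 p.2 - Qπ p.1 p.2) →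
      ∀ p : S × A, γ * c ≤ Qnew p.1 p.2 - Qπ p.1 p.2 := by
    rintro c hc ⟨s, a⟩
    have hdiff : Qnew s a - Qπ s a = γ * ∑ s', P s a s' *
        (Qnew s' (astar s') - ∑ a', π s' a' * Qπ s' a') := by
      rw [hBellnew s a, hBellπ s a]
      simp only [mul_sub, sum_sub_distrib]
      ring
    rw [hdiff]
    refine mul_le_mul_of_nonneg_left
      (le_sum_mul_of_forall_le (hPpos s a) (hPsum s a) fun s' => ?_) hγ0
    linarith [hc (s', astar s'), hV s']
  intro s a
  simpa using nonneg_of_forall_lowerBound_mul_le hγ1 hstep (s, a)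

/-- Greedy (CEM) policy improvement: the deterministic policy choosing
`a*(s) ∈ argmax_a Q^π(s,a)` has Q-function dominating Q^π. -/
theorem greedy_policy_improvement
    {S A : Type*} [Fintype S] [Fintype A] [Nonempty S] [Nonempty A]
    (P : S → A → S → ℝ) (hPpos : ∀ s a s', 0 ≤ P s a s')
    (hPsum : ∀ s a, ∑ s', P s a s' = 1)
    (r : S → A → ℝ) (γ : ℝ) (hγ0 : 0 ≤ γ) (hγ1 : γ < 1)
    (π : S → A → ℝ)
    (hπpos : ∀ s a, 0 ≤ π s a) (hπsum : ∀ s, ∑ a, π s a = 1)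
    (Qπ Qnew : S → A → ℝ)
    (hBellπ : ∀ s a, Qπ s a =
      r s a + γ * ∑ s', P s a s' * ∑ a', π s' a' * Qπ s' a')
    (astar : S → A)
    (hgreedy : ∀ s a, Qπ s a ≤ Qπ s (astar s))
    (hBellnew : ∀ s a, Qnew s a =
      r s a + γ * ∑ s', P s a s' * Qnew s' (astar s')) :
    ∀ s a, Qπ s a ≤ Qnew s a :=
  greedy_policy_improvement_general P hPpos hPsum r γ hγ0 hγ1 π hπpos hπsum Qπ Qnew hBellπ astar
    hgreedy hBellnew
end

section
/- Let γ ∈ [0,1) and let T be the optimal Bellman operator of a finite MDP. Suppose Q_{t+1}(s,a) = Q_t(s,a) + α_t(s,a)((TQ_t)(s,a) + c_t(s,a) − Q_t(s,a)) where ‖c_t‖_∞ → 0, each (s,a) satisfies α_t(s,a) ∈ [0,1], Σ_t α_t(s,a) = ∞, Σ_t α_t(s,a)² < ∞, and the updates are deterministic (no noise). Then Q_t converges to the unique fixed point Q* of T. -/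
open Finset Filter Topology

/-!
The error `e_t = Q_t - Q*` obeys, coordinatewise,
`|e_{t+1}| ≤ (1 - α_t) |e_t| + α_t (γ ‖e_t‖ + ‖c_t‖)`, because `T` is a `γ`-contraction in the
sup norm and `Q*` is its fixed point. A real sequence with `x_{t+1} ≤ (1 - α_t) x_t + α_t d` and
`∑ α_t = ∞` is eventually below `d + δ`, since `∏ (1 - α_t) → 0`. So an eventual bound
`‖e_t‖ ≤ d` improves to `‖e_t‖ ≤ γ d + δ`, and iterating from a uniform bound drives `‖e_t‖`
to `0`.
-/

lemma abs_add_mul_sub_sub_le {x y c z a : ℝ} (ha : a ∈ Set.Icc (0 : ℝ) 1) :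
    |x + a * (y + c - x) - z| ≤ (1 - a) * |x - z| + a * (|y - z| + |c|) := by
  have hsplit : x + a * (y + c - x) - z = (1 - a) * (x - z) + a * ((y - z) + c) := by ring
  calc |x + a * (y + c - x) - z|
      ≤ |(1 - a) * (x - z)| + |a * ((y - z) + c)| := hsplit ▸ abs_add_le _ _
    _ ≤ (1 - a) * |x - z| + a * (|y - z| + |c|) := by
      rw [abs_mul, abs_mul, abs_of_nonneg (sub_nonneg.2 ha.2), abs_of_nonneg ha.1]
      gcongr
      · exact ha.1
      · exact abs_add_le _ _

section Bellman

lemma abs_sup'_sub_sup'_le {ι : Type*} {s : Finset ι} (hs : s.Nonempty) {f g : ι → ℝ} {m : ℝ}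
    (h : ∀ i ∈ s, |f i - g i| ≤ m) : |s.sup' hs f - s.sup' hs g| ≤ m := by
  have sup'_le_sup'_add : ∀ f g : ι → ℝ, (∀ i ∈ s, |f i - g i| ≤ m) →
      s.sup' hs f ≤ s.sup' hs g + m := fun f g h =>
    sup'_le hs f fun i hi => by linarith [le_sup' g hi, (abs_le.mp (h i hi)).2]
  rw [abs_sub_le_iff]
  constructor
  · linarith [sup'_le_sup'_add f g h]
  · linarith [sup'_le_sup'_add g f fun i hi => abs_sub_comm (g i) (f i) ▸ h i hi]

lemma abs_sum_mul_le_of_sum_eq_one {ι : Type*} (s : Finset ι) {p v : ι → ℝ} {m : ℝ}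
    (hp : ∀ i ∈ s, 0 ≤ p i) (hsum : ∑ i ∈ s, p i = 1) (hv : ∀ i ∈ s, |v i| ≤ m) :
    |∑ i ∈ s, p i * v i| ≤ m :=
  calc |∑ i ∈ s, p i * v i| ≤ ∑ i ∈ s, |p i * v i| := abs_sum_le_sum_abs _ _
    _ ≤ ∑ i ∈ s, p i * m := sum_le_sum fun i hi => by
      rw [abs_mul, abs_of_nonneg (hp i hi)]
      exact mul_le_mul_of_nonneg_left (hv i hi) (hp i hi)
    _ = m := by rw [← sum_mul, hsum, one_mul]

variable {S A : Type*} [Fintype S] [Fintype A] [Nonempty A]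

def bellmanOptimal (P : S → A → S → ℝ) (r : S → A → ℝ) (γ : ℝ) (Q : S → A → ℝ) :
    S → A → ℝ :=
  fun s a => r s a + γ * ∑ s', P s a s' * univ.sup' univ_nonempty (Q s')

lemma abs_bellmanOptimal_sub_le {P : S → A → S → ℝ} (hP : ∀ s a s', 0 ≤ P s a s')
    (hPsum : ∀ s a, ∑ s', P s a s' = 1) (r : S → A → ℝ) {γ : ℝ} (hγ : 0 ≤ γ)
    {Q Q' : S → A → ℝ} {m : ℝ} (hQ : ∀ s a, |Q s a - Q' s a| ≤ m) (s : S) (a : A) :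
    |bellmanOptimal P r γ Q s a - bellmanOptimal P r γ Q' s a| ≤ γ * m := by
  have hdiff : bellmanOptimal P r γ Q s a - bellmanOptimal P r γ Q' s a =
      γ * ∑ s', P s a s' * (univ.sup' univ_nonempty (Q s') - univ.sup' univ_nonempty (Q' s')) := by
    simp only [bellmanOptimal, mul_sub, sum_sub_distrib]
    ring
  rw [hdiff, abs_mul, abs_of_nonneg hγ]
  exact mul_le_mul_of_nonneg_left (abs_sum_mul_le_of_sum_eq_one _ (fun s' _ => hP s a s')
    (hPsum s a) fun s' _ => abs_sup'_sub_sup'_le _ fun a' _ => hQ s' a') hγ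

lemma abs_relaxed_bellman_step_sub_le {P : S → A → S → ℝ} (hP : ∀ s a s', 0 ≤ P s a s')
    (hPsum : ∀ s a, ∑ s', P s a s' = 1) (r : S → A → ℝ) {γ : ℝ} (hγ : 0 ≤ γ)
    {Qstar : S → A → ℝ} (hfix : bellmanOptimal P r γ Qstar = Qstar) {Q : S → A → ℝ}
    {m : ℝ} (hQ : ∀ s a, |Q s a - Qstar s a| ≤ m) {α c : ℝ} (hα : α ∈ Set.Icc (0 : ℝ) 1)
    (s : S) (a : A) :
    |Q s a + α * (bellmanOptimal P r γ Q s a + c - Q s a) - Qstar s a| ≤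
      (1 - α) * |Q s a - Qstar s a| + α * (γ * m + |c|) := by
  have hcontr := abs_bellmanOptimal_sub_le hP hPsum r hγ hQ s a
  rw [hfix] at hcontr
  calc _ ≤ (1 - α) * |Q s a - Qstar s a| +
        α * (|bellmanOptimal P r γ Q s a - Qstar s a| + |c|) := abs_add_mul_sub_sub_le hα
    _ ≤ _ := by gcongr; exact hα.1

end Bellman

lemma tendsto_prod_Ico_one_sub_of_tendsto_sum {a : ℕ → ℝ} (ha : ∀ t, a t ≤ 1)
    (hdiv : Tendsto (fun n => ∑ t ∈ range n, a t) atTop atTop) (t₀ : ℕ) :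
    Tendsto (fun t => ∏ k ∈ Ico t₀ t, (1 - a k)) atTop (𝓝 0) := by
  have hsum : Tendsto (fun t => ∑ k ∈ Ico t₀ t, a k) atTop atTop := by
    refine (tendsto_atTop_add_const_right atTop (-∑ k ∈ range t₀, a k) hdiv).congr' ?_
    filter_upwards [eventually_ge_atTop t₀] with t ht
    rw [sum_Ico_eq_sub _ ht, sub_eq_add_neg]
  refine squeeze_zero (fun t => prod_nonneg fun k _ => sub_nonneg.2 (ha k)) (fun t => ?_)
    (Real.tendsto_exp_atBot.comp (tendsto_neg_atTop_atBot.comp hsum))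
  calc ∏ k ∈ Ico t₀ t, (1 - a k) ≤ ∏ k ∈ Ico t₀ t, Real.exp (-a k) :=
        prod_le_prod (fun k _ => sub_nonneg.2 (ha k)) fun k _ => Real.one_sub_le_exp_neg _
    _ = Real.exp (-∑ k ∈ Ico t₀ t, a k) := by rw [← Real.exp_sum, sum_neg_distrib]

lemma eventually_le_add_of_le_one_sub_mul_add_mul {x a : ℕ → ℝ} {d δ : ℝ} (ha : ∀ t, a t ≤ 1)
    (hdiv : Tendsto (fun n => ∑ t ∈ range n, a t) atTop atTop)
    (hrec : ∀ᶠ t in atTop, x (t + 1) ≤ (1 - a t) * x t + a t * d) (hδ : 0 < δ) :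
    ∀ᶠ t in atTop, x t ≤ d + δ := by
  obtain ⟨t₀, ht₀⟩ := hrec.exists_forall_of_atTop
  set K := max (x t₀ - d) 0
  have hbound : ∀ t, t₀ ≤ t → x t - d ≤ K * ∏ k ∈ Ico t₀ t, (1 - a k) := by
    intro t ht
    induction t, ht using Nat.le_induction with
    | base => simp [K]
    | succ t ht ih =>
      rw [prod_Ico_succ_top ht, ← mul_assoc, mul_comm _ (1 - a t)]
      calc x (t + 1) - d ≤ (1 - a t) * (x t - d) := by linarith [ht₀ t ht]
        _ ≤ _ := mul_le_mul_of_nonneg_left ih (sub_nonneg.2 (ha t))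
  have hsmall : ∀ᶠ t in atTop, K * ∏ k ∈ Ico t₀ t, (1 - a k) < δ := by
    refine Tendsto.eventually_lt_const hδ ?_
    simpa using (tendsto_prod_Ico_one_sub_of_tendsto_sum ha hdiv t₀).const_mul K
  filter_upwards [hsmall, eventually_ge_atTop t₀] with t hKt ht
  linarith [hbound t ht]

lemma tendsto_zero_of_eventually_le_mul_add {M : ℕ → ℝ} (hM : ∀ t, 0 ≤ M t) {γ B : ℝ}
    (hγ0 : 0 ≤ γ) (hγ1 : γ < 1) (hB : ∀ᶠ t in atTop, M t ≤ B)
    (hstep : ∀ d, (∀ᶠ t in atTop, M t ≤ d) → ∀ δ > 0, ∀ᶠ t in atTop, M t ≤ γ * d + δ) :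
    Tendsto M atTop (𝓝 0) := by
  refine tendsto_order.2 ⟨fun e he => .of_forall fun t => he.trans_le (hM t), fun e he => ?_⟩
  -- `e / 2` is the fixed point of `d ↦ γ * d + (1 - γ) * e / 2`, and the iterates from `B`
  -- approach it geometrically.
  have hiter : ∀ k : ℕ, ∀ᶠ t in atTop, M t ≤ γ ^ k * B + e / 2 := by
    intro k
    induction k with
    | zero => simpa using hB.mono fun t ht => by linarith
    | succ k ih =>
      have hnext := hstep _ ih ((1 - γ) * e / 2) (by nlinarith)
      convert hnext using 3
      ring
  have hpow : Tendsto (fun k : ℕ => γ ^ k * B) atTop (𝓝 0) := by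
    simpa using (tendsto_pow_atTop_nhds_zero_of_lt_one hγ0 hγ1).mul_const B
  obtain ⟨k, hk⟩ := (hpow.eventually_lt_const (half_pos he)).exists
  filter_upwards [hiter k] with t ht
  linarith

section Averaging

variable {ι : Type*} [Fintype ι] {e a : ℕ → ι → ℝ} {b : ℕ → ℝ} {γ : ℝ}

lemma exists_forall_norm_le_of_averaging (hγ0 : 0 ≤ γ) (hγ1 : γ < 1)
    (ha : ∀ t i, a t i ∈ Set.Icc (0 : ℝ) 1) (hb : BddAbove (Set.range b))
    (hrec : ∀ t i, |e (t + 1) i| ≤ (1 - a t i) * |e t i| + a t i * (γ * ‖e t‖ + b t)) :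
    ∃ B, ∀ t, ‖e t‖ ≤ B := by
  obtain ⟨C, hC⟩ := hb
  -- `B` is chosen so that `γ * B + C ≤ B`: each step is a convex combination of values `≤ B`.
  refine ⟨max ‖e 0‖ (C / (1 - γ)), fun t => ?_⟩
  set B := max ‖e 0‖ (C / (1 - γ))
  have hB0 : 0 ≤ B := (norm_nonneg _).trans (le_max_left _ _)
  have hCB : γ * B + C ≤ B := by
    have := le_max_right ‖e 0‖ (C / (1 - γ))
    rw [div_le_iff₀ (by linarith)] at this
    linarith
  induction t with
  | zero => exact le_max_left _ _
  | succ t ih =>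
    refine (pi_norm_le_iff_of_nonneg hB0).2 fun i => ?_
    have hei : |e t i| ≤ B := (norm_le_pi_norm (e t) i).trans ih
    have hbt : b t ≤ C := hC ⟨t, rfl⟩
    obtain ⟨hai0, hai1⟩ := ha t i
    rw [Real.norm_eq_abs]
    calc |e (t + 1) i| ≤ (1 - a t i) * |e t i| + a t i * (γ * ‖e t‖ + b t) := hrec t i
      _ ≤ (1 - a t i) * B + a t i * (γ * B + C) := by gcongr
      _ ≤ B := by nlinarith

lemma eventually_norm_le_mul_add_of_averaging (hγ0 : 0 ≤ γ) (ha : ∀ t i, a t i ∈ Set.Icc (0 : ℝ) 1)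
    (hdiv : ∀ i, Tendsto (fun n => ∑ t ∈ range n, a t i) atTop atTop)
    (hb : Tendsto b atTop (𝓝 0))
    (hrec : ∀ t i, |e (t + 1) i| ≤ (1 - a t i) * |e t i| + a t i * (γ * ‖e t‖ + b t))
    {d : ℝ} (hd : ∀ᶠ t in atTop, ‖e t‖ ≤ d) {δ : ℝ} (hδ : 0 < δ) :
    ∀ᶠ t in atTop, ‖e t‖ ≤ γ * d + δ := by
  have hbδ : ∀ᶠ t in atTop, b t ≤ δ / 2 := hb.eventually_le_const (half_pos hδ)
  have hcoord : ∀ i, ∀ᶠ t in atTop, |e t i| ≤ γ * d + δ / 2 + δ / 2 := by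
    intro i
    refine eventually_le_add_of_le_one_sub_mul_add_mul (fun t => (ha t i).2) (hdiv i) ?_
      (half_pos hδ)
    filter_upwards [hd, hbδ] with t hdt hbt
    have : γ * ‖e t‖ + b t ≤ γ * d + δ / 2 := by nlinarith
    nlinarith [hrec t i, (ha t i).1]
  filter_upwards [eventually_all.2 hcoord, hd] with t ht hdt
  have hd0 : 0 ≤ γ * d + δ := by nlinarith [norm_nonneg (e t)]
  exact (pi_norm_le_iff_of_nonneg hd0).2 fun i => by
    rw [Real.norm_eq_abs]
    linarith [ht i]

theorem tendsto_zero_of_averaging (hγ0 : 0 ≤ γ) (hγ1 : γ < 1)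
    (ha : ∀ t i, a t i ∈ Set.Icc (0 : ℝ) 1)
    (hdiv : ∀ i, Tendsto (fun n => ∑ t ∈ range n, a t i) atTop atTop)
    (hb : Tendsto b atTop (𝓝 0))
    (hrec : ∀ t i, |e (t + 1) i| ≤ (1 - a t i) * |e t i| + a t i * (γ * ‖e t‖ + b t)) :
    Tendsto e atTop (𝓝 0) := by
  obtain ⟨B, hB⟩ := exists_forall_norm_le_of_averaging hγ0 hγ1 ha hb.bddAbove_range hrec
  exact tendsto_zero_iff_norm_tendsto_zero.2 <|
    tendsto_zero_of_eventually_le_mul_add (fun t => norm_nonneg _) hγ0 hγ1 (.of_forall hB)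
      fun d hd δ hδ => eventually_norm_le_mul_add_of_averaging hγ0 ha hdiv hb hrec hd hδ

end Averaging

theorem perturbed_q_iteration_converges_general
    {S A : Type*} [Fintype S] [Fintype A] [Nonempty A]
    (P : S → A → S → ℝ) (hPpos : ∀ s a s', 0 ≤ P s a s')
    (hPsum : ∀ s a, ∑ s', P s a s' = 1)
    (r : S → A → ℝ) (γ : ℝ) (hγ0 : 0 ≤ γ) (hγ1 : γ < 1)
    (T : (S → A → ℝ) → (S → A → ℝ))
    (hT : ∀ Q s a, T Q s a =
      r s a + γ * ∑ s', P s a s' *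
        (Finset.univ.sup' Finset.univ_nonempty fun a' => Q s' a'))
    (Qstar : S → A → ℝ) (hfix : T Qstar = Qstar)
    (Q : ℕ → S → A → ℝ) (α : ℕ → S → A → ℝ) (c : ℕ → S → A → ℝ)
    (hα01 : ∀ t s a, α t s a ∈ Set.Icc (0 : ℝ) 1)
    (hαdiv : ∀ s a, Tendsto (fun n => ∑ t ∈ Finset.range n, α t s a) atTop atTop)
    (hc : Tendsto (fun t => ⨆ p : S × A, |c t p.1 p.2|) atTop (nhds 0))
    (hupd : ∀ t s a, Q (t + 1) s a =
      Q t s a + α t s a * (T (Q t) s a + c t s a - Q t s a)) :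
    ∀ s a, Tendsto (fun t => Q t s a) atTop (nhds (Qstar s a)) := by
  obtain rfl : T = bellmanOptimal P r γ := funext fun Q => funext₂ (hT Q)
  set e : ℕ → S × A → ℝ := fun t p => Q t p.1 p.2 - Qstar p.1 p.2
  set ε : ℕ → ℝ := fun t => ⨆ p : S × A, |c t p.1 p.2|
  have hrec : ∀ t p, |e (t + 1) p| ≤
      (1 - α t p.1 p.2) * |e t p| + α t p.1 p.2 * (γ * ‖e t‖ + ε t) := by
    rintro t ⟨s, a⟩
    have hcε : |c t s a| ≤ ε t :=
      le_ciSup (f := fun p : S × A => |c t p.1 p.2|) (Set.finite_range _).bddAbove (s, a)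
    calc |Q (t + 1) s a - Qstar s a|
        ≤ (1 - α t s a) * |e t (s, a)| + α t s a * (γ * ‖e t‖ + |c t s a|) := by
          rw [hupd]
          exact abs_relaxed_bellman_step_sub_le hPpos hPsum r hγ0 hfix
            (fun s a => norm_le_pi_norm (e t) (s, a)) (hα01 t s a) s a
      _ ≤ _ := by gcongr; exact (hα01 t s a).1
  have he := tendsto_zero_of_averaging hγ0 hγ1 (fun t (p : S × A) => hα01 t p.1 p.2)
    (fun p : S × A => hαdiv p.1 p.2) hc hrec
  intro s a
  simpa [e] using (((continuous_apply (s, a)).tendsto 0).comp he).add_const (Qstar s a)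

/-- Deterministic stochastic-approximation convergence: iterates driven by
the Bellman operator plus a vanishing correction converge to the fixed point. -/
theorem perturbed_q_iteration_converges
    {S A : Type*} [Fintype S] [Fintype A] [Nonempty S] [Nonempty A]
    (P : S → A → S → ℝ) (hPpos : ∀ s a s', 0 ≤ P s a s')
    (hPsum : ∀ s a, ∑ s', P s a s' = 1)
    (r : S → A → ℝ) (γ : ℝ) (hγ0 : 0 ≤ γ) (hγ1 : γ < 1)
    (T : (S → A → ℝ) → (S → A → ℝ))
    (hT : ∀ Q s a, T Q s a =
      r s a + γ * ∑ s', P s a s' *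
        (Finset.univ.sup' Finset.univ_nonempty fun a' => Q s' a'))
    (Qstar : S → A → ℝ) (hfix : T Qstar = Qstar)
    (Q : ℕ → S → A → ℝ) (α : ℕ → S → A → ℝ) (c : ℕ → S → A → ℝ)
    (hα01 : ∀ t s a, α t s a ∈ Set.Icc (0 : ℝ) 1)
    (hαdiv : ∀ s a, Tendsto (fun n => ∑ t ∈ Finset.range n, α t s a) atTop atTop)
    (hαsq : ∀ s a, Summable fun t => (α t s a) ^ 2)
    (hc : Tendsto (fun t => ⨆ p : S × A, |c t p.1 p.2|) atTop (nhds 0))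
    (hupd : ∀ t s a, Q (t + 1) s a =
      Q t s a + α t s a * (T (Q t) s a + c t s a - Q t s a)) :
    ∀ s a, Tendsto (fun t => Q t s a) atTop (nhds (Qstar s a)) :=
  perturbed_q_iteration_converges_general P hPpos hPsum r γ hγ0 hγ1 T hT Qstar hfix Q α c hα01 hαdiv
    hc hupd
end
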